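/- Let T₂(x) = 1 − 2x². If x₁, x₂, …, x_p ∈ (−1,1) is a period-p orbit of T₂ (i.e., T₂(x_n) = x_{n+1} for 1 ≤ n ≤ p−1 and T₂(x_p) = x₁) with x_n ∉ {−1,1} for all n, then the multiplier λ = ∏_{n=1}^p T₂'(x_n) satisfies λ² = 4^p, i.e., |λ| = 2^p. -/

import Mathlib

/-!
With `H(x) = 1 - x²` one has `T₂'(x)² H(x) = 4 H(T₂ x)`. Multiplying over a periodic orbit, the
product of the `H(xₙ)` appears on both sides (the orbit merely permutes its points), so it cancels
as soon as no `xₙ` is a zero `±1` of `H`, leaving `λ² = 4^p`.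
-/

open Finset

section PeriodicOrbit

variable {α M : Type*} (f : α → α) {p : ℕ} {x : ℕ → α}
  (horb : ∀ n, n + 1 < p → f (x n) = x (n + 1)) (hper : f (x (p - 1)) = x 0)
include horb hper

theorem prod_range_comp_eq_of_periodic_orbit [CommMonoid M] (g : α → M) :
    ∏ n ∈ range p, g (f (x n)) = ∏ n ∈ range p, g (x n) := by
  cases p with
  | zero => simp
  | succ m =>
    rw [prod_range_succ, prod_range_succ', show m = m + 1 - 1 from rfl, hper]
    congr 1
    exact prod_congr rfl fun n hn => by rw [horb n (by simpa using mem_range.mp hn)]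

theorem prod_range_eq_pow_of_periodic_orbit
    [CommMonoidWithZero M] [IsCancelMulZero M] [Nontrivial M] (H D : α → M) (k : M)
    (hHD : ∀ y, D y * H y = k * H (f y)) (hH : ∀ n < p, H (x n) ≠ 0) :
    ∏ n ∈ range p, D (x n) = k ^ p := by
  have hprod : ∏ n ∈ range p, H (x n) ≠ 0 :=
    prod_ne_zero_iff.mpr fun n hn => hH n (mem_range.mp hn)
  refine mul_right_cancel₀ hprod ?_
  calc (∏ n ∈ range p, D (x n)) * ∏ n ∈ range p, H (x n)
      = ∏ n ∈ range p, k * H (f (x n)) := by rw [← prod_mul_distrib]; simp only [hHD]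
    _ = k ^ p * ∏ n ∈ range p, H (x n) := by
      rw [prod_mul_distrib, prod_const, card_range,
        prod_range_comp_eq_of_periodic_orbit f horb hper]

end PeriodicOrbit

theorem deriv_one_sub_two_mul_sq (y : ℝ) : deriv (fun x : ℝ => 1 - 2 * x ^ 2) y = -4 * y := by
  have h := ((hasDerivAt_pow 2 y).const_mul (2 : ℝ)).const_sub 1
  rw [h.deriv]
  ring

theorem sq_deriv_mul_one_sub_sq (y : ℝ) :
    (-4 * y) ^ 2 * (1 - y ^ 2) = 4 * (1 - (1 - 2 * y ^ 2) ^ 2) := by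
  ring

theorem one_sub_sq_ne_zero {y : ℝ} (hy : y ≠ -1 ∧ y ≠ 1) : 1 - y ^ 2 ≠ 0 := by
  rw [sub_ne_zero, ne_comm, Ne, sq_eq_one_iff]
  tauto

theorem chebyshev_multiplier_general (T₂ : ℝ → ℝ) (hT : T₂ = fun x => 1 - 2 * x ^ 2)
    (p : ℕ) (x : ℕ → ℝ)
    (hx1 : ∀ n < p, x n ≠ -1 ∧ x n ≠ 1)
    (horb : ∀ n, n + 1 < p → T₂ (x n) = x (n + 1))
    (hper : T₂ (x (p - 1)) = x 0) :
    (∏ n ∈ Finset.range p, deriv T₂ (x n)) ^ 2 = 4 ^ p ∧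
      |∏ n ∈ Finset.range p, deriv T₂ (x n)| = 2 ^ p := by
  subst hT
  have hsq : (∏ n ∈ range p, deriv (fun x : ℝ => 1 - 2 * x ^ 2) (x n)) ^ 2 = 4 ^ p := by
    simp only [deriv_one_sub_two_mul_sq, ← prod_pow]
    exact prod_range_eq_pow_of_periodic_orbit _ horb hper (fun y => 1 - y ^ 2) _ 4
      sq_deriv_mul_one_sub_sq fun n hn => one_sub_sq_ne_zero (hx1 n hn)
  refine ⟨hsq, ?_⟩
  rw [← abs_of_pos (pow_pos two_pos p : (0 : ℝ) < 2 ^ p), ← sq_eq_sq_iff_abs_eq_abs, hsq,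
    ← pow_mul, mul_comm, pow_mul]
  norm_num

/-- Every period-`p` orbit of the Chebyshev map `T₂(x) = 1 - 2x²` in `(-1,1)`
avoiding `±1` has multiplier `λ` with `λ² = 4^p`, i.e. `|λ| = 2^p`.
The orbit is indexed as `x 0, …, x (p-1)`. -/
theorem chebyshev_multiplier (T₂ : ℝ → ℝ) (hT : T₂ = fun x => 1 - 2 * x ^ 2)
    (p : ℕ) (hp : 1 ≤ p) (x : ℕ → ℝ)
    (hxI : ∀ n < p, x n ∈ Set.Ioo (-1 : ℝ) 1)
    (hx1 : ∀ n < p, x n ≠ -1 ∧ x n ≠ 1)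
    (horb : ∀ n, n + 1 < p → T₂ (x n) = x (n + 1))
    (hper : T₂ (x (p - 1)) = x 0) :
    (∏ n ∈ Finset.range p, deriv T₂ (x n)) ^ 2 = 4 ^ p ∧
      |∏ n ∈ Finset.range p, deriv T₂ (x n)| = 2 ^ p :=
  chebyshev_multiplier_general T₂ hT p x hx1 horb hper
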